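/- arXiv:math/0605149 — 6 statements merged into one kernel-verified Lean document; each statement's English description precedes it below -/
import Mathlib

section
/- Let A be an abelian topological group. A group homomorphism χ: A → T is continuous if and only if there exists a neighborhood U of 0 in A such that χ(U) ⊆ Λ₁, where Λ₁ is the image of [-1/4, 1/4] in T = R/Z. -/
/-! Λ₁ is the closed ball of radius 1/4 for the quotient norm of `T`, and on the ball of radius
1/(2k) multiplication by `k` multiplies the norm by `k`. Hence if `k • x ∈ Λ₁` for all `k ≤ n`,
then `n ‖x‖ ≤ 1/4` by induction on `n`, so a character mapping `U` into Λ₁ maps the neighbourhood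
`⋂_{k ≤ n} (k • ·)⁻¹ U` of `0` into the ball of radius 1/(4n). -/

open scoped Topology

noncomputable section

/-- The circle group `T = R/Z`. -/
abbrev Torus := AddCircle (1 : ℝ)

/-- `Λ₁`, the image of `[-1/4, 1/4]` in `T = R/Z`. -/
def Lam : Set Torus := (fun x : ℝ => (x : Torus)) '' Set.Icc (-(1/4)) (1/4)

/-- The Pontryagin dual: continuous characters into `T = R/Z`, with the compact-open
topology (the topology on `ContinuousAddMonoidHom` is induced from `C(A, T)`). -/
abbrev PDual (A : Type*) [AddCommGroup A] [TopologicalSpace A] [IsTopologicalAddGroup A] :=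
  ContinuousAddMonoidHom A Torus

/-- The polar `S^▷ = {χ ∈ Â : χ(S) ⊆ Λ₁}` of a subset `S ⊆ A`. -/
def polar {A : Type*} [AddCommGroup A] [TopologicalSpace A] [IsTopologicalAddGroup A]
    (S : Set A) : Set (PDual A) := {χ | ∀ s ∈ S, χ s ∈ Lam}

/-- The prepolar `Φ^◁ = {a ∈ A : χ(a) ∈ Λ₁ for all χ ∈ Φ}` of a set `Φ ⊆ Â`. -/
def prepolar {A : Type*} [AddCommGroup A] [TopologicalSpace A] [IsTopologicalAddGroup A]
    (Φ : Set (PDual A)) : Set A := {a | ∀ χ ∈ Φ, χ a ∈ Lam}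

/-- The evaluation homomorphism `α_A : A → Â̂`, `α_A(a)(χ) = χ(a)`. -/
def evalHom {A : Type*} [AddCommGroup A] [TopologicalSpace A] [IsTopologicalAddGroup A]
    (a : A) : PDual (PDual A) where
  toFun := fun χ => χ a
  map_zero' := rfl
  map_add' := fun _ _ => rfl
  continuous_toFun := continuous_eval_const a

namespace AddCircle

variable {p : ℝ}

theorem exists_coe_eq_and_abs_eq_norm (x : AddCircle p) :
    ∃ r : ℝ, (r : AddCircle p) = x ∧ |r| = ‖x‖ := by
  obtain ⟨s, rfl⟩ := QuotientAddGroup.mk_surjective x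
  refine ⟨s - round (p⁻¹ * s) * p, ?_, (norm_eq p).symm⟩
  rw [coe_sub, ← zsmul_eq_mul, coe_zsmul, coe_period, smul_zero, sub_zero]

theorem norm_nsmul_eq_mul_norm (hp : p ≠ 0) {n : ℕ} {x : AddCircle p}
    (h : n * ‖x‖ ≤ |p| / 2) : ‖n • x‖ = n * ‖x‖ := by
  obtain ⟨r, rfl, hr⟩ := exists_coe_eq_and_abs_eq_norm x
  have habs : |n * r| = n * |r| := by rw [abs_mul, Nat.abs_cast]
  rw [← coe_nsmul, nsmul_eq_mul, (norm_coe_eq_abs_iff p hp).2 (by rwa [habs, hr]), habs, hr]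

theorem mul_norm_le_of_forall_norm_nsmul_le (hp : p ≠ 0) {x : AddCircle p} {n : ℕ}
    (h : ∀ k ≤ n, ‖k • x‖ ≤ |p| / 4) : n * ‖x‖ ≤ |p| / 4 := by
  induction n with
  | zero => simp only [CharP.cast_eq_zero, zero_mul]; positivity
  | succ n ih =>
    have hn : n * ‖x‖ ≤ |p| / 4 := ih fun k hk => h k (by omega)
    have h1 : ‖x‖ ≤ |p| / 4 := by simpa using h 1 (by omega)
    have hhalf : (n + 1 : ℕ) * ‖x‖ ≤ |p| / 2 := by push_cast; linarith
    rw [← norm_nsmul_eq_mul_norm hp hhalf]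
    exact h (n + 1) le_rfl

end AddCircle

theorem lam_eq_closedBall : Lam = Metric.closedBall (0 : Torus) (1 / 4) := by
  ext x
  rw [mem_closedBall_zero_iff]
  constructor
  · rintro ⟨r, hrI, rfl⟩
    have hr : |r| ≤ 1 / 4 := abs_le.2 hrI
    rwa [(AddCircle.norm_coe_eq_abs_iff 1 one_ne_zero).2 (by norm_num; linarith)]
  · intro hx
    obtain ⟨r, rfl, hr⟩ := AddCircle.exists_coe_eq_and_abs_eq_norm x
    exact ⟨r, abs_le.1 (hr ▸ hx), rfl⟩

theorem eventually_forall_nsmul_mem {M : Type*} [AddMonoid M] [TopologicalSpace M] [ContinuousAdd M]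
    {U : Set M} (hU : U ∈ 𝓝 0) (n : ℕ) : ∀ᶠ a in 𝓝 0, ∀ k ≤ n, k • a ∈ U :=
  (Filter.eventually_all_finite (Set.finite_le_nat n)).2 fun k _ =>
    (continuous_nsmul k).tendsto' 0 0 (nsmul_zero k) hU

variable {A : Type*} [AddCommGroup A] [TopologicalSpace A] [IsTopologicalAddGroup A]

/-- A character `χ : A → T` is continuous if and only if there exists a neighborhood `U`
of `0` in `A` with `χ(U) ⊆ Λ₁`. -/
theorem continuous_iff_nhds_subset_lam (χ : A →+ Torus) :
    Continuous χ ↔ ∃ U ∈ 𝓝 (0 : A), ∀ a ∈ U, χ a ∈ Lam := by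
  constructor
  · intro hχ
    refine ⟨χ ⁻¹' Lam, hχ.continuousAt.preimage_mem_nhds ?_, fun a ha => ha⟩
    rw [map_zero, lam_eq_closedBall]
    exact Metric.closedBall_mem_nhds 0 (by norm_num)
  · rintro ⟨U, hU, hUχ⟩
    refine continuous_of_tendsto_nhds_zero χ (NormedAddGroup.tendsto_nhds_zero.2 fun ε hε => ?_)
    obtain ⟨n, hn⟩ := exists_lt_nsmul hε (1 / 4 : ℝ)
    filter_upwards [eventually_forall_nsmul_mem hU n] with a ha
    have hχa : n * ‖χ a‖ ≤ 1 / 4 := by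
      simpa using AddCircle.mul_norm_le_of_forall_norm_nsmul_le one_ne_zero fun k hk => by
        simpa [lam_eq_closedBall, map_nsmul] using hUχ _ (ha k hk)
    rw [nsmul_eq_mul] at hn
    exact lt_of_mul_lt_mul_left (hχa.trans_lt hn) n.cast_nonneg

end
end

section
/- Let A be an abelian topological group. The evaluation homomorphism α_A : A → Â̂, α_A(a)(χ) = χ(a), is continuous if and only if every compact subset of Â is equicontinuous. -/
open scoped Topology

noncomputable section

/-! The compact-open topology on `C(Â, T)` is the topology of uniform convergence on compact
sets, so a map `A → C(Â, T)` is continuous exactly when, for each compact `Σ ⊆ Â`, the family of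
functions `a ↦ χ a` indexed by `χ ∈ Σ` is equicontinuous. For a family of homomorphisms,
equicontinuity everywhere follows from equicontinuity at `0` by translation. -/

theorem ContinuousMap.continuous_iff_forall_isCompact_equicontinuous {X Y Z : Type*}
    [TopologicalSpace X] [TopologicalSpace Y] [UniformSpace Z] (f : X → C(Y, Z)) :
    Continuous f ↔ ∀ K : Set Y, IsCompact K → Equicontinuous fun y : K ↦ fun x ↦ f x y := by
  rw [continuous_iff_continuous_uniformOnFun, UniformOnFun.continuous_rng_iff]
  exact forall₂_congr fun K _ ↦ equicontinuous_iff_continuous.symm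

theorem equicontinuous_iff_forall_nhds_zero {ι G M hom : Type*} [TopologicalSpace G]
    [UniformSpace M] [AddGroup G] [AddGroup M] [IsTopologicalAddGroup G] [IsUniformAddGroup M]
    [FunLike hom G M] [AddMonoidHomClass hom G M] (F : ι → hom) :
    Equicontinuous ((↑) ∘ F) ↔
      ∀ W ∈ 𝓝 (0 : M), ∃ V ∈ 𝓝 (0 : G), ∀ i, ∀ a ∈ V, F i a ∈ W := by
  constructor
  · intro hF W hW
    have hU : {p : M × M | p.2 - p.1 ∈ W} ∈ uniformity M := by
      rw [uniformity_eq_comap_nhds_zero M]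
      exact Filter.preimage_mem_comap hW
    refine ⟨_, hF 0 _ hU, fun i a ha ↦ ?_⟩
    simpa using ha i
  · intro hF
    refine equicontinuous_of_equicontinuousAt_zero F fun U hU ↦ ?_
    rw [uniformity_eq_comap_nhds_zero M] at hU
    obtain ⟨W, hW, hWU⟩ := hU
    obtain ⟨V, hV, hVW⟩ := hF W hW
    filter_upwards [hV] with a ha i
    exact hWU (by simpa using hVW i a ha)

variable {A : Type*} [AddCommGroup A] [TopologicalSpace A] [IsTopologicalAddGroup A]

/-- The evaluation homomorphism `α_A : A → Â̂` is continuous if and only if every compact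
subset of `Â` is equicontinuous. -/
theorem evalHom_continuous_iff_compact_equicontinuous :
    Continuous (evalHom : A → PDual (PDual A)) ↔
      ∀ Sig : Set (PDual A), IsCompact Sig →
        ∀ W ∈ 𝓝 (0 : Torus), ∃ V ∈ 𝓝 (0 : A), ∀ χ ∈ Sig, ∀ a ∈ V, χ a ∈ W := by
  rw [(ContinuousAddMonoidHom.isInducing_toContinuousMap _ _).continuous_iff,
    ContinuousMap.continuous_iff_forall_isCompact_equicontinuous]
  refine forall₂_congr fun Sig _ ↦ ?_
  exact (equicontinuous_iff_forall_nhds_zero ((↑) : Sig → PDual A)).trans <| by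
    simp only [Subtype.forall]

end
end

section
/- Let A be a Hausdorff abelian topological group. The evaluation homomorphism α_A : A → Â̂ is k-continuous: the restriction of α_A to every compact subset K of A is continuous. -/
/-!
On a locally compact subspace `K ⊆ A` the pairing `(χ, x) ↦ χ x` on `Â × K` is continuous,
because it factors through restriction `Â → C(K, 𝕋)` followed by evaluation, which is jointly
continuous on `C(K, 𝕋) × K`. Currying a jointly continuous pairing gives a map into the
compact-open topology that is continuous, so `α_A` is continuous on `K`.
-/

open scoped Topology

noncomputable section

variable {A : Type*} [AddCommGroup A] [TopologicalSpace A] [IsTopologicalAddGroup A]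

theorem ContinuousMap.continuous_eval_restrict {X Y : Type*} [TopologicalSpace X]
    [TopologicalSpace Y] (K : Set X) [LocallyCompactSpace K] :
    Continuous fun p : C(X, Y) × K => p.1 p.2 :=
  continuous_eval.comp ((continuous_restrict K).prodMap continuous_id)

theorem continuous_evalHom_restrict (K : Set A) [LocallyCompactSpace K] :
    Continuous fun x : K => evalHom (x : A) := by
  have hpairing : Continuous fun p : K × PDual A => p.2 p.1 :=
    (ContinuousMap.continuous_eval_restrict K).comp
      (((ContinuousAddMonoidHom.isInducing_toContinuousMap A Torus).continuous.prodMap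
        continuous_id).comp continuous_swap)
  exact ContinuousAddMonoidHom.continuous_of_continuous_uncurry _ hpairing

theorem evalHom_kContinuous_general :
    ∀ K : Set A, IsCompact K →
      Continuous (fun x : K => evalHom (x : A) : K → PDual (PDual A)) := by
  intro K hK
  have : CompactSpace K := isCompact_iff_compactSpace.mp hK
  -- `K` is locally compact: it is compact and, as a subspace of a topological group, regular.
  exact continuous_evalHom_restrict K

/-- For a Hausdorff abelian topological group `A`, the evaluation homomorphism
`α_A : A → Â̂` is k-continuous: its restriction to every compact subset is continuous. -/
theorem evalHom_kContinuous [T2Space A] :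
    ∀ K : Set A, IsCompact K →
      Continuous (fun x : K => evalHom (x : A) : K → PDual (PDual A)) :=
  evalHom_kContinuous_general

end
end

section
/- For every abelian topological group A, the Pontryagin dual Â is locally quasi-convex: the sets K^▷ for K compact in A form a neighborhood base at 0 of Â consisting of quasi-convex sets, i.e., sets S with S = S^▷◁. -/
open scoped Topology

noncomputable section

variable {A : Type*} [AddCommGroup A] [TopologicalSpace A] [IsTopologicalAddGroup A]

/-!
A character `χ` with `χ(k • x) ∈ Λ₁` for `k = 1, …, n` satisfies `‖χ x‖ ≤ 1/(4n)`: the norm of the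
circle is additive along multiples `k • t` as long as `k ‖t‖ ≤ 1/2`, so by induction each further
multiple stays in the quarter-ball only if `(k + 1) ‖χ x‖ ≤ 1/4`. Hence the polars of the compact
sets `K ∪ 2K ∪ ⋯ ∪ nK` are cofinal among the compact-open neighbourhoods
`{χ | ∀ x ∈ K, ‖χ x‖ < ε}`, each of which (for `ε = 1/4`) lies in `K^▷`. Quasi-convexity of a polar
`S^▷` is formal: evaluation at a point of `S` is a character of `Â` lying in `S^▷▷`.
-/

namespace AddCircle

variable {p : ℝ}

theorem exists_coe_eq_norm_eq_abs (x : AddCircle p) :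
    ∃ s : ℝ, (s : AddCircle p) = x ∧ ‖x‖ = |s| := by
  obtain ⟨r, rfl⟩ := QuotientAddGroup.mk_surjective x
  refine ⟨r - round (p⁻¹ * r) * p, ?_, norm_eq p⟩
  rw [coe_sub, sub_eq_self, coe_eq_zero_iff]
  exact ⟨round (p⁻¹ * r), zsmul_eq_mul _ _⟩

theorem norm_nsmul_eq_of_mul_norm_le (hp : p ≠ 0) {x : AddCircle p} {n : ℕ}
    (h : n * ‖x‖ ≤ |p| / 2) : ‖n • x‖ = n * ‖x‖ := by
  obtain ⟨s, rfl, hs⟩ := exists_coe_eq_norm_eq_abs x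
  have hns : |(n : ℝ) * s| = n * ‖(s : AddCircle p)‖ := by rw [abs_mul, Nat.abs_cast, hs]
  rwa [← coe_nsmul, nsmul_eq_mul, ← hns, norm_coe_eq_abs_iff p hp, hns]

theorem nat_mul_norm_le_of_forall_norm_nsmul_le (hp : p ≠ 0) {x : AddCircle p} {n : ℕ}
    (h : ∀ k ∈ Finset.Icc 1 n, ‖k • x‖ ≤ |p| / 4) : n * ‖x‖ ≤ |p| / 4 := by
  induction n with
  | zero => simp only [Nat.cast_zero, zero_mul]; positivity
  | succ n ih =>
    have hn : n * ‖x‖ ≤ |p| / 4 :=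
      ih fun k hk => h k (Finset.Icc_subset_Icc_right n.le_succ hk)
    have h1 : ‖x‖ ≤ |p| / 4 := by simpa using h 1 (by simp)
    have hsum : ((n + 1 : ℕ) : ℝ) * ‖x‖ ≤ |p| / 2 := by push_cast; linarith
    rw [← norm_nsmul_eq_of_mul_norm_le hp hsum]
    exact h (n + 1) (by simp)

end AddCircle

theorem mem_Lam_iff (x : Torus) : x ∈ Lam ↔ ‖x‖ ≤ 1 / 4 := by
  constructor
  · rintro ⟨r, hr, rfl⟩
    have habs : |r| ≤ 1 / 4 := abs_le.mpr hr
    rwa [(AddCircle.norm_coe_eq_abs_iff 1 one_ne_zero).mpr (by rw [abs_one]; linarith)]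
  · intro h
    obtain ⟨s, rfl, hs⟩ := AddCircle.exists_coe_eq_norm_eq_abs x
    exact ⟨s, abs_le.mp (hs ▸ h), rfl⟩

namespace ContinuousAddMonoidHom

theorem hasBasis_nhds_zero_forall_norm_lt {M E : Type*} [AddMonoid M] [TopologicalSpace M]
    [SeminormedAddCommGroup E] :
    (𝓝 (0 : ContinuousAddMonoidHom M E)).HasBasis
      (fun Kε : Set M × ℝ => IsCompact Kε.1 ∧ 0 < Kε.2)
      (fun Kε => {χ | ∀ x ∈ Kε.1, ‖χ x‖ < Kε.2}) := by
  have hC : (𝓝 (0 : C(M, E))).HasBasis (fun Kε : Set M × ℝ => IsCompact Kε.1 ∧ 0 < Kε.2)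
      (fun Kε => {f | ∀ x ∈ Kε.1, dist 0 (f x) < Kε.2}) := by
    rw [nhds_eq_comap_uniformity]
    exact (Metric.uniformity_basis_dist.compactConvergenceUniformity).comap _
  rw [(isInducing_toContinuousMap M E).nhds_eq_comap]
  convert hC.comap (toContinuousMap : ContinuousAddMonoidHom M E → C(M, E)) using 1
  · rfl
  · ext
    simp

end ContinuousAddMonoidHom

theorem polar_mem_nhds_zero {K : Set A} (hK : IsCompact K) : polar K ∈ 𝓝 (0 : PDual A) :=
  ContinuousAddMonoidHom.hasBasis_nhds_zero_forall_norm_lt.mem_of_superset (i := (K, 1 / 4))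
    ⟨hK, by norm_num⟩ fun χ hχ x hx => (mem_Lam_iff _).mpr (hχ x hx).le

theorem exists_isCompact_polar_subset {K : Set A} (hK : IsCompact K) {ε : ℝ} (hε : 0 < ε) :
    ∃ L : Set A, IsCompact L ∧ polar L ⊆ {χ : PDual A | ∀ x ∈ K, ‖χ x‖ < ε} := by
  obtain ⟨n, hn⟩ := exists_nat_gt (1 / 4 / ε)
  have hnε : 1 / 4 < n * ε := (div_lt_iff₀ hε).mp hn
  refine ⟨⋃ k ∈ Finset.Icc 1 n, (k • ·) '' K,
    (Finset.Icc 1 n).isCompact_biUnion fun k _ => hK.image (continuous_nsmul k), ?_⟩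
  intro χ hχ x hx
  have hmul : n * ‖χ x‖ ≤ 1 / 4 := by
    simpa using AddCircle.nat_mul_norm_le_of_forall_norm_nsmul_le (p := 1) one_ne_zero
      fun k hk => by
        rw [← map_nsmul, abs_one, ← mem_Lam_iff]
        exact hχ _ (Set.mem_biUnion hk ⟨x, hx, rfl⟩)
  exact lt_of_mul_lt_mul_left (hmul.trans_lt hnε) n.cast_nonneg

theorem hasBasis_nhds_zero_polar :
    (𝓝 (0 : PDual A)).HasBasis (fun K : Set A => IsCompact K) polar :=
  ContinuousAddMonoidHom.hasBasis_nhds_zero_forall_norm_lt.to_hasBasis'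
    (fun _ hKε => exists_isCompact_polar_subset hKε.1 hKε.2) fun _ => polar_mem_nhds_zero

theorem evalHom_mem_polar_polar {S : Set A} {a : A} (ha : a ∈ S) :
    evalHom a ∈ polar (polar S) :=
  fun _ hχ => hχ a ha

theorem subset_prepolar_polar (Φ : Set (PDual A)) : Φ ⊆ prepolar (polar Φ) :=
  fun χ hχ _ hξ => hξ χ hχ

theorem prepolar_polar_polar (S : Set A) : prepolar (polar (polar S)) = polar S := by
  refine Set.Subset.antisymm ?_ (subset_prepolar_polar _)
  exact fun _ hχ a ha => hχ _ (evalHom_mem_polar_polar ha)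

/-- The Pontryagin dual `Â` is locally quasi-convex: the polars `K^▷` of compact sets
`K ⊆ A` form a neighborhood base at `0` of `Â` consisting of quasi-convex sets. -/
theorem dual_locallyQuasiConvex :
    (𝓝 (0 : PDual A)).HasBasis (fun K : Set A => IsCompact K) (fun K => polar K) ∧
    ∀ K : Set A, IsCompact K → prepolar (polar (polar K)) = polar K :=
  ⟨hasBasis_nhds_zero_polar, fun K _ => prepolar_polar_polar K⟩

end
end

section
/- Let A be a locally quasi-convex Hausdorff abelian topological group. Then the evaluation homomorphism α_A : A → Â̂ is injective. -/
open scoped Topology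

noncomputable section

variable {A : Type*} [AddCommGroup A] [TopologicalSpace A] [IsTopologicalAddGroup A]

theorem zero_mem_Lam : (0 : Torus) ∈ Lam := ⟨0, by norm_num, by simp⟩

theorem mem_prepolar_of_forall_apply_eq_zero {a : A} (ha : ∀ χ : PDual A, χ a = 0)
    (Φ : Set (PDual A)) : a ∈ prepolar Φ :=
  fun χ _ => (ha χ).symm ▸ zero_mem_Lam

theorem specializes_zero_of_forall_apply_eq_zero
    (hlqc : (𝓝 (0 : A)).HasBasis (fun U : Set A => U ∈ 𝓝 (0 : A))
      (fun U => prepolar (polar U)))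
    {a : A} (ha : ∀ χ : PDual A, χ a = 0) : a ⤳ 0 :=
  specializes_iff_pure.2 fun _ hV =>
    let ⟨_, _, hUV⟩ := hlqc.mem_iff.1 hV
    hUV (mem_prepolar_of_forall_apply_eq_zero ha _)

/-- If `A` is a locally quasi-convex Hausdorff abelian topological group, then the
evaluation homomorphism `α_A : A → Â̂` is injective. -/
theorem evalHom_injective_of_lqc [T2Space A]
    (hlqc : (𝓝 (0 : A)).HasBasis (fun U : Set A => U ∈ 𝓝 (0 : A))
      (fun U => prepolar (polar U))) :
    Function.Injective (evalHom : A → PDual (PDual A)) := by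
  intro a b hab
  have hsub : ∀ χ : PDual A, χ (a - b) = 0 := fun χ => by
    rw [map_sub, sub_eq_zero]
    exact DFunLike.congr_fun hab χ
  exact sub_eq_zero.1 (specializes_zero_of_forall_apply_eq_zero hlqc hsub).eq

end
end

section
/- Let A be an abelian topological group and U ≤ A an open subgroup. Then U is dually embedded in A: every continuous character χ : U → T extends to a continuous character of A. Moreover, the restriction map Â → Û is an open surjection. -/
open scoped Topology

noncomputable section

variable {A : Type*} [AddCommGroup A] [TopologicalSpace A] [IsTopologicalAddGroup A]

/-!
Since `T` is divisible, hence injective, every character of `U` extends to a character of `A`,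
and such an extension is continuous because it is continuous on the open subgroup `U`.

For openness, a basic neighbourhood of `0` in `Â` consists of the characters of norm `≤ ε` on a
compact `K`, and `K ⊆ U + ⟨S⟩` for a finite `S`. The elements of `S` are adjoined one at a time.
To extend a character `ψ` of an open subgroup `W` to `W + ℤa`, send `a` to a `q`-th root of
`ψ(qa)` of norm at most `‖ψ(qa)‖`, where `q` is the order of `a` modulo `W`. As `K` meets only
finitely many cosets `W + na`, smallness of `ψ` on the compact set of the points `x - na ∈ W`
(`x ∈ K`) and on `qa` makes the extension small on `K`.
-/

namespace Torus

theorem exists_nsmul_eq_norm_le (t : Torus) {q : ℕ} (hq : q ≠ 0) :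
    ∃ s : Torus, q • s = t ∧ ‖s‖ ≤ ‖t‖ / q := by
  obtain ⟨x, rfl⟩ := QuotientAddGroup.mk_surjective t
  have hround : ((x - round x : ℝ) : Torus) = x := by
    rw [AddCircle.coe_sub, sub_eq_self, AddCircle.coe_eq_zero_iff]
    exact ⟨round x, by simp⟩
  refine ⟨((x - round x) / q : ℝ), ?_, ?_⟩
  · rw [← AddCircle.coe_nsmul, nsmul_eq_mul, mul_div_cancel₀ _ (Nat.cast_ne_zero.2 hq), hround]
  · calc ‖(((x - round x) / q : ℝ) : Torus)‖ ≤ |(x - round x) / q| :=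
          QuotientAddGroup.norm_mk_le_norm
      _ = ‖(x : Torus)‖ / q := by
          rw [abs_div, Nat.abs_cast, UnitAddCircle.norm_eq]

theorem exists_addMonoidHom_comp_eq_of_ker_le {G B : Type*} [AddCommGroup G] [AddCommGroup B]
    (e : G →+ B) (ρ : G →+ Torus) (h : e.ker ≤ ρ.ker) :
    ∃ χ : B →+ Torus, χ.comp e = ρ := by
  obtain ⟨χ, hχ⟩ := (Module.Baer.of_divisible Torus).extension_property_addMonoidHom
    (QuotientAddGroup.kerLift e) (QuotientAddGroup.kerLift_injective e)
    (QuotientAddGroup.lift e.ker ρ h)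
  exact ⟨χ, AddMonoidHom.ext fun g => DFunLike.congr_fun hχ (g : G ⧸ e.ker)⟩

end Torus

section Extension

variable {B : Type*} [AddCommGroup B]

theorem exists_extension_apply_eq_of_zsmul (W : AddSubgroup B) (ψ : W →+ Torus) (a : B)
    (t : Torus) (ht : ∀ (n : ℤ) (hn : n • a ∈ W), ψ ⟨n • a, hn⟩ = n • t) :
    ∃ χ : B →+ Torus, χ.comp W.subtype = ψ ∧ χ a = t := by
  have hker : (W.subtype.coprod (zmultiplesHom B a)).ker ≤
      (ψ.coprod (zmultiplesHom Torus t)).ker := by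
    rintro ⟨w, n⟩ hwn
    have hw : (w : B) = -(n • a) := eq_neg_of_add_eq_zero_left hwn
    have hna : n • a ∈ W := by simpa [hw] using neg_mem w.2
    have : w = -⟨n • a, hna⟩ := Subtype.ext hw
    simp [this, ht n hna]
  obtain ⟨χ, hχ⟩ := Torus.exists_addMonoidHom_comp_eq_of_ker_le _ _ hker
  refine ⟨χ, AddMonoidHom.ext fun w => ?_, ?_⟩
  · simpa using DFunLike.congr_fun hχ (w, 0)
  · simpa using DFunLike.congr_fun hχ (0, 1)

theorem exists_extension_norm_apply_le (W : AddSubgroup B) (a : B) :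
    ∃ b : W, ∀ ψ : W →+ Torus, ∃ χ : B →+ Torus, χ.comp W.subtype = ψ ∧ ‖χ a‖ ≤ ‖ψ b‖ := by
  set q := addOrderOf (a : B ⧸ W)
  have hmem : ∀ n : ℤ, n • a ∈ W ↔ (q : ℤ) ∣ n := fun n => by
    rw [← QuotientAddGroup.eq_zero_iff, QuotientAddGroup.mk_zsmul, addOrderOf_dvd_iff_zsmul_eq_zero]
  have hqa : (q : ℤ) • a ∈ W := (hmem q).2 dvd_rfl
  refine ⟨⟨(q : ℤ) • a, hqa⟩, fun ψ => ?_⟩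
  rcases eq_or_ne q 0 with hq | hq
  -- `q = 0`: `a` has infinite order modulo `W`, and `χ a = 0` is compatible with `ψ`.
  · obtain ⟨χ, hχ, hχa⟩ := exists_extension_apply_eq_of_zsmul W ψ a 0 fun n hn => by
      obtain rfl : n = 0 := by simpa [hq] using (hmem n).1 hn
      simp only [zero_smul]
      exact ψ.map_zero
    exact ⟨χ, hχ, by simp [hχa]⟩
  · obtain ⟨t, hqt, ht⟩ := Torus.exists_nsmul_eq_norm_le (ψ ⟨(q : ℤ) • a, hqa⟩) hq
    obtain ⟨χ, hχ, rfl⟩ := exists_extension_apply_eq_of_zsmul W ψ a t fun n hn => by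
      obtain ⟨m, rfl⟩ := (hmem n).1 hn
      have : (⟨((q : ℤ) * m) • a, hn⟩ : W) = m • ⟨(q : ℤ) • a, hqa⟩ := by
        ext; simp [mul_comm, mul_zsmul]
      rw [this, map_zsmul, ← hqt, ← natCast_zsmul, smul_smul, mul_comm]
    refine ⟨χ, hχ, ht.trans (div_le_self (norm_nonneg _) ?_)⟩
    exact_mod_cast Nat.one_le_iff_ne_zero.2 hq

end Extension

section SmallExtensions

variable {G : Type*} [AddCommGroup G]

def ExtendsSmall (W : AddSubgroup G) (K' : Set G) (δ : ℝ) (K : Set G) (ε : ℝ) : Prop :=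
  ∀ ψ : W →+ Torus, (∀ w : W, (w : G) ∈ K' → ‖ψ w‖ ≤ δ) →
    ∃ χ : G →+ Torus, χ.comp W.subtype = ψ ∧ ∀ x ∈ K, ‖χ x‖ ≤ ε

theorem ExtendsSmall.trans {W W' : AddSubgroup G} (hWW' : W ≤ W') {K' K₁ K : Set G}
    {δ δ₁ ε : ℝ} (h : ExtendsSmall W K' δ K₁ δ₁) (h' : ExtendsSmall W' K₁ δ₁ K ε) :
    ExtendsSmall W K' δ K ε := by
  intro ψ hψ
  obtain ⟨χ₀, hχ₀, hsmall₀⟩ := h ψ hψ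
  obtain ⟨χ, hχ, hsmall⟩ := h' (χ₀.comp W'.subtype) fun w hw => hsmall₀ w hw
  refine ⟨χ, ?_, hsmall⟩
  rw [← hχ₀]
  ext w
  exact DFunLike.congr_fun hχ ⟨w, hWW' w.2⟩

end SmallExtensions

section Topological

variable {G : Type*} [AddCommGroup G] [TopologicalSpace G] [IsTopologicalAddGroup G]

theorem IsCompact.exists_finset_forall_sub_zsmul_mem {W : AddSubgroup G}
    (hW : IsOpen (W : Set G)) {a : G} {K : Set G} (hK : IsCompact K)
    (hKW : K ⊆ ↑(W ⊔ AddSubgroup.zmultiples a)) :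
    ∃ t : Finset ℤ, ∀ x ∈ K, ∃ n ∈ t, x - n • a ∈ W := by
  have hcover : K ⊆ ⋃ n : ℤ, (· - n • a) ⁻¹' W := fun x hx => by
    obtain ⟨w, hw, _, ⟨n, rfl⟩, rfl⟩ := AddSubgroup.mem_sup.1 (hKW hx)
    exact Set.mem_iUnion.2 ⟨n, by simpa using hw⟩
  obtain ⟨t, ht⟩ := hK.elim_finite_subcover _
    (fun n => hW.preimage (continuous_sub_right _)) hcover
  exact ⟨t, fun x hx => by simpa using ht hx⟩

theorem exists_extendsSmall_of_subset_sup_zmultiples {W : AddSubgroup G}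
    (hW : IsOpen (W : Set G)) (a : G) {K : Set G} (hK : IsCompact K)
    (hKW : K ⊆ ↑(W ⊔ AddSubgroup.zmultiples a)) {ε : ℝ} (hε : 0 < ε) :
    ∃ K' ⊆ (W : Set G), IsCompact K' ∧ ∃ δ > 0, ExtendsSmall W K' δ K ε := by
  obtain ⟨t, ht⟩ := hK.exists_finset_forall_sub_zsmul_mem hW hKW
  obtain ⟨b, hb⟩ := exists_extension_norm_apply_le W a
  set M := ∑ n ∈ t, |(n : ℝ)|
  have hM : 0 ≤ M := Finset.sum_nonneg fun n _ => abs_nonneg (n : ℝ)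
  refine ⟨(⋃ n ∈ t, (· - n • a) '' K ∩ W) ∪ {(b : G)}, ?_, ?_, ε / (M + 1), by positivity, ?_⟩
  · exact Set.union_subset (Set.iUnion₂_subset fun _ _ => Set.inter_subset_right)
      (Set.singleton_subset_iff.2 b.2)
  · refine (t.finite_toSet.isCompact_biUnion fun n _ => ?_).union isCompact_singleton
    exact (hK.image (continuous_sub_right _)).inter_right (AddSubgroup.isClosed_of_isOpen W hW)
  · intro ψ hψ
    obtain ⟨χ, hχ, hχa⟩ := hb ψ
    refine ⟨χ, hχ, fun x hx => ?_⟩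
    obtain ⟨n, hn, hxn⟩ := ht x hx
    have hxn_small : ‖χ (x - n • a)‖ ≤ ε / (M + 1) := by
      rw [← hχ] at hψ
      exact hψ ⟨_, hxn⟩ (Or.inl (Set.mem_iUnion₂.2 ⟨n, hn, ⟨x, hx, rfl⟩, hxn⟩))
    have ha_small : ‖χ a‖ ≤ ε / (M + 1) := hχa.trans (hψ b (Or.inr rfl))
    have hnM : |(n : ℝ)| ≤ M :=
      Finset.single_le_sum (f := fun i : ℤ => |(i : ℝ)|) (fun _ _ => abs_nonneg _) hn
    calc ‖χ x‖ = ‖χ (x - n • a) + n • χ a‖ := by rw [← map_zsmul, ← map_add, sub_add_cancel]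
      _ ≤ ‖χ (x - n • a)‖ + |(n : ℝ)| * ‖χ a‖ :=
          (norm_add_le _ _).trans (by rw [← Int.norm_eq_abs]; gcongr; exact norm_zsmul_le _ _)
      _ ≤ ε / (M + 1) + M * (ε / (M + 1)) := by gcongr
      _ = ε := by field_simp; ring

theorem exists_extendsSmall_of_subset_sup_closure (S : Finset G) {W : AddSubgroup G}
    (hW : IsOpen (W : Set G)) {K : Set G} (hK : IsCompact K)
    (hKW : K ⊆ ↑(W ⊔ AddSubgroup.closure (S : Set G))) {ε : ℝ} (hε : 0 < ε) :
    ∃ K' ⊆ (W : Set G), IsCompact K' ∧ ∃ δ > 0, ExtendsSmall W K' δ K ε := by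
  classical
  induction S using Finset.induction_on generalizing W K ε with
  | empty =>
    refine exists_extendsSmall_of_subset_sup_zmultiples hW 0 hK (hKW.trans ?_) hε
    simp
  | insert a S _ ih =>
    have hKW' : K ⊆ ↑((W ⊔ AddSubgroup.zmultiples a) ⊔ AddSubgroup.closure (S : Set G)) := by
      rwa [Finset.coe_insert, ← Set.singleton_union, AddSubgroup.closure_union,
        ← AddSubgroup.zmultiples_eq_closure, ← sup_assoc] at hKW
    obtain ⟨K₁, hK₁W, hK₁, δ₁, hδ₁, h'⟩ :=
      ih (AddSubgroup.isOpen_mono le_sup_left hW) hK hKW' hε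
    obtain ⟨K', hK'W, hK', δ, hδ, h⟩ :=
      exists_extendsSmall_of_subset_sup_zmultiples hW a hK₁ hK₁W hδ₁
    exact ⟨K', hK'W, hK', δ, hδ, h.trans le_sup_left h'⟩

theorem IsCompact.exists_finset_subset_sup_closure {U : AddSubgroup G}
    (hU : IsOpen (U : Set G)) {K : Set G} (hK : IsCompact K) :
    ∃ S : Finset G, K ⊆ ↑(U ⊔ AddSubgroup.closure (S : Set G)) := by
  obtain ⟨S, hS⟩ := hK.elim_finite_subcover (fun y : G => (· - y) ⁻¹' U)
    (fun y => hU.preimage (continuous_sub_right y))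
    (fun x _ => Set.mem_iUnion.2 ⟨x, by simp [U.zero_mem]⟩)
  refine ⟨S, fun x hx => ?_⟩
  obtain ⟨y, hy, hxy⟩ := Set.mem_iUnion₂.1 (hS hx)
  rw [← sub_add_cancel x y]
  exact add_mem (AddSubgroup.mem_sup_left hxy)
    (AddSubgroup.mem_sup_right (AddSubgroup.subset_closure hy))

theorem AddMonoidHom.continuous_of_continuous_comp_subtype {H : Type*} [AddGroup H]
    [TopologicalSpace H] [IsTopologicalAddGroup H] (f : G →+ H) {U : AddSubgroup G}
    (hU : IsOpen (U : Set G)) (hf : Continuous (f.comp U.subtype)) : Continuous f :=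
  continuous_of_continuousAt_zero f <|
    (hU.isOpenEmbedding_subtypeVal.continuousAt_iff (x := 0)).1 hf.continuousAt

theorem PDual.hasBasis_nhds_zero :
    (𝓝 (0 : PDual G)).HasBasis (fun p : Set G × ℝ => IsCompact p.1 ∧ 0 < p.2)
      fun p => {χ | ∀ x ∈ p.1, ‖χ x‖ ≤ p.2} := by
  rw [(ContinuousAddMonoidHom.isInducing_toContinuousMap G Torus).nhds_eq_comap]
  refine ((nhds_basis_uniformity' (x := ((0 : PDual G) : C(G, Torus)))
    Metric.uniformity_basis_dist_le.compactConvergenceUniformity).comap _).congr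
    (fun _ => Iff.rfl) fun p _ => ?_
  ext χ
  simp [UniformSpace.ball, dist_eq_norm]

end Topological

/-- An open subgroup `U ≤ A` is dually embedded: every continuous character of `U`
extends to a continuous character of `A`; moreover the restriction map `Â → Û` is an
open surjection. -/
theorem restriction_surjective_isOpenMap_of_open_subgroup (U : AddSubgroup A)
    (hU : IsOpen (U : Set A)) :
    Function.Surjective
      (fun χ : PDual A => χ.comp
        ({ U.subtype with continuous_toFun := continuous_subtype_val } :
          ContinuousAddMonoidHom U A)) ∧
    IsOpenMap
      (fun χ : PDual A => χ.comp
        ({ U.subtype with continuous_toFun := continuous_subtype_val } :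
          ContinuousAddMonoidHom U A)) := by
  set ι : ContinuousAddMonoidHom U A :=
    { U.subtype with continuous_toFun := continuous_subtype_val }
  have hlift : ∀ (ψ : PDual U) (χ : A →+ Torus) (hχ : χ.comp U.subtype = ψ.toAddMonoidHom),
      (⟨χ, χ.continuous_of_continuous_comp_subtype hU (hχ ▸ ψ.continuous)⟩ : PDual A).comp ι = ψ :=
    fun ψ χ hχ => ContinuousAddMonoidHom.ext fun u => DFunLike.congr_fun hχ u
  refine ⟨fun ψ => ?_, ?_⟩
  · obtain ⟨χ, hχ⟩ := (Module.Baer.of_divisible Torus).extension_property_addMonoidHom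
      U.subtype Subtype.coe_injective ψ.toAddMonoidHom
    exact ⟨_, hlift ψ χ hχ⟩
  refine (IsTopologicalAddGroup.isOpenMap_iff_nhds_zero
    (f := AddMonoidHom.mk' (fun χ : PDual A => χ.comp ι) fun _ _ => rfl)).2 fun N hN => ?_
  obtain ⟨⟨K, ε⟩, ⟨hK, hε⟩, hKN⟩ := PDual.hasBasis_nhds_zero.mem_iff.1 hN
  obtain ⟨S, hS⟩ := hK.exists_finset_subset_sup_closure hU
  obtain ⟨K', -, hK', δ, hδ, hext⟩ := exists_extendsSmall_of_subset_sup_closure S hU hK hS hε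
  have hK'U : IsCompact (Subtype.val ⁻¹' K' : Set U) :=
    (AddSubgroup.isClosed_of_isOpen U hU).isClosedEmbedding_subtypeVal.isCompact_preimage hK'
  refine PDual.hasBasis_nhds_zero.mem_iff.2 ⟨⟨_, δ⟩, ⟨hK'U, hδ⟩, fun ψ hψ => ?_⟩
  obtain ⟨χ, hχ, hχK⟩ := hext ψ hψ
  rw [← hlift ψ χ hχ]
  exact hKN hχK

end
end
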